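/- arXiv:2403.13604 — 4 statements merged into one kernel-verified Lean document; each statement's English description precedes it below -/
import Mathlib

section
/- Let ξ = exp(2πi j/2^m) be a 2-power root of unity. Then the radial limit lim_{t→1⁻} U₀(tξ) exists and equals the finite sum U(ξ) = ∑_{n=0}^{m} (−1)^n {ξ}_n (all further terms {ξ}_n with n ≥ m+1 vanish). -/
/-- The Mahler factorial `{q}_n = ∏_{j=0}^{n-1} (1 - q^{2^j})`. -/
noncomputable def mahlerFac (q : ℂ) (n : ℕ) : ℂ :=
  ∏ j ∈ Finset.range n, (1 - q ^ 2 ^ j)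

/-- `z m` is the number of zero digits among the (nonleading) binary digits of `m`,
with `z 0 = 0`. -/
def zeroDigits (m : ℕ) : ℕ := (Nat.digits 2 m).count 0

/-- `U₀(q) = (1/2) ∑_{m=0}^∞ (-1)^{z(m)} q^m`, analytic for `|q| < 1`. -/
noncomputable def U0 (q : ℂ) : ℂ :=
  (1 / 2) * ∑' m : ℕ, (-1 : ℂ) ^ zeroDigits m * q ^ m

noncomputable def aC (m : ℕ) : ℂ := (-1 : ℂ) ^ zeroDigits m

noncomputable def SC (q : ℂ) : ℂ := ∑' m : ℕ, aC m * q ^ m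

lemma U0_eq_SC (q : ℂ) : U0 q = (1 / 2) * SC q := rfl

lemma norm_aC (m : ℕ) : ‖aC m‖ = 1 := by simp [aC]

lemma zeroDigits_zero : zeroDigits 0 = 0 := by simp [zeroDigits]

lemma zeroDigits_one : zeroDigits 1 = 0 := by simp [zeroDigits]

lemma zeroDigits_two_mul {k : ℕ} (hk : k ≠ 0) :
    zeroDigits (2 * k) = zeroDigits k + 1 := by
  have h : Nat.digits 2 (2 * k) = 0 :: Nat.digits 2 k := by
    rw [Nat.digits_def' (by norm_num : 1 < 2) (by positivity)]
    congr 1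
    · omega
    · congr 1; omega
  rw [zeroDigits, zeroDigits, h]; simp

lemma zeroDigits_two_mul_add_one (k : ℕ) :
    zeroDigits (2 * k + 1) = zeroDigits k := by
  have h : Nat.digits 2 (2 * k + 1) = 1 :: Nat.digits 2 k := by
    rw [Nat.digits_def' (by norm_num : 1 < 2) (by positivity)]
    congr 1
    · omega
    · congr 1; omega
  rw [zeroDigits, zeroDigits, h]; simp

lemma aC_zero : aC 0 = 1 := by simp [aC, zeroDigits_zero]
lemma aC_one : aC 1 = 1 := by simp [aC, zeroDigits_one]

lemma aC_two_mul {k : ℕ} (hk : k ≠ 0) : aC (2 * k) = -aC k := by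
  rw [aC, aC, zeroDigits_two_mul hk, pow_succ]; ring

lemma aC_two_mul_add_one (k : ℕ) : aC (2 * k + 1) = aC k := by
  rw [aC, aC, zeroDigits_two_mul_add_one]

lemma summable_aC {q : ℂ} (hq : ‖q‖ < 1) : Summable (fun m => aC m * q ^ m) := by
  apply Summable.of_norm
  simp only [norm_mul, norm_aC, one_mul, norm_pow]
  exact summable_geometric_of_lt_one (norm_nonneg q) hq

set_option maxHeartbeats 800000 in
lemma SC_funceq {q : ℂ} (hq : ‖q‖ < 1) : SC q = 2 + (q - 1) * SC (q ^ 2) := by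
  have hq2 : ‖q ^ 2‖ < 1 := by
    rw [norm_pow]
    exact pow_lt_one₀ (norm_nonneg q) hq two_ne_zero
  have hEfun : (fun k => aC (2 * k) * q ^ (2 * k)) =
      fun k => (if k = 0 then (2 : ℂ) else 0) + -(aC k * (q ^ 2) ^ k) := by
    funext k
    rcases eq_or_ne k 0 with rfl | hk
    · norm_num [aC_zero]
    · rw [if_neg hk, aC_two_mul hk, ← pow_mul]; ring
  have hOfun : (fun k => aC (2 * k + 1) * q ^ (2 * k + 1)) =
      fun k => q * (aC k * (q ^ 2) ^ k) := by
    funext k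
    rw [aC_two_mul_add_one, ← pow_mul, pow_succ]; ring
  have hs2 := summable_aC hq2
  have hsum0 : Summable (fun k : ℕ => if k = 0 then (2 : ℂ) else 0) :=
    (hasSum_ite_eq 0 (2 : ℂ)).summable
  have hE : Summable (fun k => aC (2 * k) * q ^ (2 * k)) := by
    rw [hEfun]; exact hsum0.add hs2.neg
  have hO : Summable (fun k => aC (2 * k + 1) * q ^ (2 * k + 1)) := by
    rw [hOfun]; exact hs2.mul_left q
  have hsplit := tsum_even_add_odd (f := fun m => aC m * q ^ m) hE hO
  have hEval : (∑' k, aC (2 * k) * q ^ (2 * k)) = 2 - SC (q ^ 2) := by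
    rw [hEfun, Summable.tsum_add hsum0 hs2.neg, tsum_ite_eq, tsum_neg, SC, sub_eq_add_neg]
  have hOval : (∑' k, aC (2 * k + 1) * q ^ (2 * k + 1)) = q * SC (q ^ 2) := by
    rw [hOfun, tsum_mul_left, SC]
  have : SC q = (2 - SC (q ^ 2)) + q * SC (q ^ 2) := by
    rw [← hEval, ← hOval]; exact hsplit.symm
  rw [this]; ring

lemma U0_funceq {q : ℂ} (hq : ‖q‖ < 1) : U0 q = 1 + (q - 1) * U0 (q ^ 2) := by
  rw [U0_eq_SC, U0_eq_SC, SC_funceq hq]; ring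

noncomputable def AC (N : ℕ) : ℂ := ∑ m ∈ Finset.range N, aC m

lemma AC_two_mul {M : ℕ} (hM : 1 ≤ M) : AC (2 * M) = 2 := by
  induction M with
  | zero => omega
  | succ M ih =>
    rcases eq_or_ne M 0 with rfl | hM0
    · show (∑ m ∈ Finset.range 2, aC m) = 2
      rw [Finset.sum_range_succ, Finset.sum_range_one, aC_zero, aC_one]
      norm_num
    · have h2 : 2 * (M + 1) = (2 * M + 1) + 1 := by ring
      rw [AC, h2, Finset.sum_range_succ, Finset.sum_range_succ, aC_two_mul hM0,
        aC_two_mul_add_one]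
      have := ih (Nat.one_le_iff_ne_zero.mpr hM0)
      rw [AC] at this
      rw [this]; ring

lemma norm_AC (N : ℕ) : ‖AC N‖ ≤ 3 := by
  rcases Nat.even_or_odd N with ⟨M, rfl⟩ | ⟨M, rfl⟩
  · rcases eq_or_ne M 0 with rfl | hM0
    · simp [AC]
    · rw [show M + M = 2 * M by ring, AC_two_mul (Nat.one_le_iff_ne_zero.mpr hM0)]
      norm_num
  · have h : AC (2 * M + 1) = AC (2 * M) + aC (2 * M) := Finset.sum_range_succ _ _
    rw [h]
    refine (norm_add_le _ _).trans ?_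
    have h1 : ‖AC (2 * M)‖ ≤ 2 := by
      rcases eq_or_ne M 0 with rfl | hM0
      · simp [AC]
      · rw [AC_two_mul (Nat.one_le_iff_ne_zero.mpr hM0)]; norm_num
    have h2 : ‖aC (2 * M)‖ = 1 := norm_aC _
    linarith

lemma abel_partial (t : ℂ) (N : ℕ) :
    ∑ m ∈ Finset.range N, aC m * t ^ m =
      (∑ m ∈ Finset.range N, AC (m + 1) * (t ^ m - t ^ (m + 1))) + AC N * t ^ N := by
  induction N with
  | zero => simp [AC]
  | succ N ih =>
    rw [Finset.sum_range_succ, Finset.sum_range_succ, ih]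
    have ha : aC N = AC (N + 1) - AC N := by
      rw [AC, AC, Finset.sum_range_succ]; ring
    rw [ha]; ring

lemma SC_bound {t : ℝ} (h0 : 0 ≤ t) (h1 : t < 1) : ‖SC (t : ℂ)‖ ≤ 3 := by
  have hnorm : ‖(t : ℂ)‖ < 1 := by
    rwa [Complex.norm_real, Real.norm_of_nonneg h0]
  have hsum := (summable_aC hnorm).hasSum
  have htend : Filter.Tendsto (fun N => ∑ m ∈ Finset.range N, aC m * (t : ℂ) ^ m)
      Filter.atTop (nhds (SC (t : ℂ))) := hsum.tendsto_sum_nat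
  refine le_of_tendsto htend.norm (Filter.Eventually.of_forall fun N => ?_)
  rw [abel_partial]
  refine (norm_add_le _ _).trans ?_
  have hB : ‖∑ m ∈ Finset.range N, AC (m + 1) * ((t : ℂ) ^ m - (t : ℂ) ^ (m + 1))‖
      ≤ 3 * (1 - t ^ N) := by
    refine (norm_sum_le _ _).trans ?_
    have hterm : ∀ m ∈ Finset.range N,
        ‖AC (m + 1) * ((t : ℂ) ^ m - (t : ℂ) ^ (m + 1))‖ ≤ 3 * (t ^ m - t ^ (m + 1)) := by
      intro m _
      rw [norm_mul]
      have hre : ((t : ℂ) ^ m - (t : ℂ) ^ (m + 1)) = ((t ^ m - t ^ (m + 1) : ℝ) : ℂ) := by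
        push_cast; ring
      rw [hre, Complex.norm_real, Real.norm_of_nonneg]
      · have := norm_AC (m + 1)
        have hnn : 0 ≤ t ^ m - t ^ (m + 1) := by
          have : t ^ (m + 1) ≤ t ^ m := pow_le_pow_of_le_one h0 h1.le (by omega)
          linarith
        nlinarith
      · have : t ^ (m + 1) ≤ t ^ m := pow_le_pow_of_le_one h0 h1.le (by omega)
        linarith
    refine (Finset.sum_le_sum hterm).trans ?_
    rw [← Finset.mul_sum]
    have : ∑ m ∈ Finset.range N, (t ^ m - t ^ (m + 1)) = 1 - t ^ N := by
      have := Finset.sum_range_sub' (fun i => t ^ i) N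
      simpa using this
    rw [this]
  have hA : ‖AC N * (t : ℂ) ^ N‖ ≤ 3 * t ^ N := by
    rw [norm_mul, norm_pow, Complex.norm_real, Real.norm_of_nonneg h0]
    have := norm_AC N
    have : 0 ≤ t ^ N := pow_nonneg h0 N
    nlinarith [norm_AC N, pow_nonneg h0 N]
  have hp : 0 ≤ t ^ N := pow_nonneg h0 N
  linarith

lemma U0_bound {t : ℝ} (h0 : 0 ≤ t) (h1 : t < 1) : ‖U0 (t : ℂ)‖ ≤ 3 / 2 := by
  rw [U0_eq_SC, norm_mul]
  have := SC_bound h0 h1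
  have h : ‖(1 / 2 : ℂ)‖ = 1 / 2 := by norm_num
  rw [h]; linarith

lemma norm_pow_two_lt {q : ℂ} (hq : ‖q‖ < 1) (N : ℕ) : ‖q ^ 2 ^ N‖ < 1 := by
  rw [norm_pow]
  exact pow_lt_one₀ (norm_nonneg q) hq (by positivity)

lemma U0_iter {q : ℂ} (hq : ‖q‖ < 1) (N : ℕ) :
    U0 q = (∑ n ∈ Finset.range N, (-1 : ℂ) ^ n * mahlerFac q n) +
      (-1 : ℂ) ^ N * mahlerFac q N * U0 (q ^ 2 ^ N) := by
  induction N with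
  | zero => simp [mahlerFac]
  | succ N ih =>
    have hfe := U0_funceq (norm_pow_two_lt hq N)
    have hpow : (q ^ 2 ^ N) ^ 2 = q ^ 2 ^ (N + 1) := by
      rw [← pow_mul, ← pow_succ]
    rw [hpow] at hfe
    have hm : mahlerFac q (N + 1) = mahlerFac q N * (1 - q ^ 2 ^ N) :=
      Finset.prod_range_succ _ _
    rw [ih, hfe, Finset.sum_range_succ, hm]
    ring

theorem stmt0 (j : ℤ) (m : ℕ) (ξ : ℂ)
    (hξ : ξ = Complex.exp (2 * Real.pi * Complex.I * j / 2 ^ m)) :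
    (∀ n, m + 1 ≤ n → mahlerFac ξ n = 0) ∧
    Filter.Tendsto (fun t : ℝ => U0 ((t : ℂ) * ξ)) (nhdsWithin 1 (Set.Iio 1))
      (nhds (∑ n ∈ Finset.range (m + 1), (-1 : ℂ) ^ n * mahlerFac ξ n)) := by
  -- ξ^(2^m) = 1
  have hξm : ξ ^ 2 ^ m = 1 := by
    rw [hξ, ← Complex.exp_nat_mul]
    have h2 : (2 : ℂ) ^ m ≠ 0 := pow_ne_zero m two_ne_zero
    have heq : ((2 ^ m : ℕ) : ℂ) * (2 * ↑Real.pi * Complex.I * ↑j / 2 ^ m) =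
        (j : ℂ) * (2 * ↑Real.pi * Complex.I) := by
      push_cast
      field_simp
    rw [heq, Complex.exp_int_mul_two_pi_mul_I]
  have hfac : (1 : ℂ) - ξ ^ 2 ^ m = 0 := by rw [hξm]; ring
  have hzero : ∀ n, m + 1 ≤ n → mahlerFac ξ n = 0 := by
    intro n hn
    exact Finset.prod_eq_zero (Finset.mem_range.mpr (by omega)) hfac
  refine ⟨hzero, ?_⟩
  have hnormξ : ‖ξ‖ = 1 := by
    have h1 : ‖ξ‖ ^ 2 ^ m = 1 := by rw [← norm_pow, hξm, norm_one]
    rcases lt_trichotomy (‖ξ‖) 1 with h | h | h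
    · exfalso
      have := pow_lt_one₀ (norm_nonneg ξ) h (show (2:ℕ) ^ m ≠ 0 by positivity)
      rw [h1] at this; exact lt_irrefl 1 this
    · exact h
    · exfalso
      have := one_lt_pow₀ h (show (2:ℕ) ^ m ≠ 0 by positivity)
      rw [h1] at this; exact lt_irrefl 1 this
  have hξm1 : ξ ^ 2 ^ (m + 1) = 1 := by
    rw [pow_succ, pow_mul, hξm, one_pow]
  -- the finite-sum part, as a function of t
  set L : ℂ := ∑ n ∈ Finset.range (m + 1), (-1 : ℂ) ^ n * mahlerFac ξ n with hL
  have hcont : ∀ n : ℕ, Continuous fun t : ℝ => mahlerFac ((t : ℂ) * ξ) n := by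
    intro n
    unfold mahlerFac
    exact continuous_finset_prod _ fun i _ =>
      continuous_const.sub ((Complex.continuous_ofReal.mul continuous_const).pow _)
  have hF : Filter.Tendsto
      (fun t : ℝ => ∑ n ∈ Finset.range (m + 1), (-1 : ℂ) ^ n * mahlerFac ((t : ℂ) * ξ) n)
      (nhdsWithin 1 (Set.Iio 1)) (nhds L) := by
    have hc : Continuous fun t : ℝ =>
        ∑ n ∈ Finset.range (m + 1), (-1 : ℂ) ^ n * mahlerFac ((t : ℂ) * ξ) n :=
      continuous_finset_sum _ fun n _ => continuous_const.mul (hcont n)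
    have h1 : (fun t : ℝ =>
        ∑ n ∈ Finset.range (m + 1), (-1 : ℂ) ^ n * mahlerFac ((t : ℂ) * ξ) n) 1 = L := by
      simp [hL]
    exact (hc.tendsto' 1 L h1).mono_left nhdsWithin_le_nhds
  -- the remainder tends to 0
  have hMf : Filter.Tendsto (fun t : ℝ => mahlerFac ((t : ℂ) * ξ) (m + 1))
      (nhdsWithin 1 (Set.Iio 1)) (nhds 0) := by
    have h1 : (fun t : ℝ => mahlerFac ((t : ℂ) * ξ) (m + 1)) 1 = 0 := by
      simpa using hzero (m + 1) le_rfl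
    exact ((hcont (m + 1)).tendsto' 1 0 h1).mono_left nhdsWithin_le_nhds
  have hev : ∀ᶠ t : ℝ in nhdsWithin 1 (Set.Iio 1), 0 < t ∧ t < 1 := by
    have h1 : ∀ᶠ t : ℝ in nhdsWithin 1 (Set.Iio 1), 0 < t :=
      eventually_nhdsWithin_of_eventually_nhds (eventually_gt_nhds one_pos)
    have h2 : ∀ᶠ t : ℝ in nhdsWithin 1 (Set.Iio 1), t < 1 :=
      eventually_mem_nhdsWithin
    exact h1.and h2
  set R : ℝ → ℂ := fun t =>
    (-1 : ℂ) ^ (m + 1) * mahlerFac ((t : ℂ) * ξ) (m + 1) * U0 (((t : ℂ) * ξ) ^ 2 ^ (m + 1))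
    with hR
  have hRlim : Filter.Tendsto R (nhdsWithin 1 (Set.Iio 1)) (nhds 0) := by
    apply squeeze_zero_norm'
      (a := fun t : ℝ => ‖mahlerFac ((t : ℂ) * ξ) (m + 1)‖ * (3 / 2))
    · filter_upwards [hev] with t ht
      obtain ⟨ht0, ht1⟩ := ht
      have hps : (((t : ℂ) * ξ) ^ 2 ^ (m + 1)) = ((t ^ 2 ^ (m + 1) : ℝ) : ℂ) := by
        rw [mul_pow, hξm1, mul_one]
        push_cast
        ring
      rw [hR]
      simp only
      rw [norm_mul, norm_mul, norm_pow, norm_neg, norm_one, one_pow, one_mul, hps]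
      have hb : ‖U0 ((t ^ 2 ^ (m + 1) : ℝ) : ℂ)‖ ≤ 3 / 2 :=
        U0_bound (pow_nonneg ht0.le _) (pow_lt_one₀ ht0.le ht1 (by positivity))
      exact mul_le_mul_of_nonneg_left hb (norm_nonneg _)
    · have : Filter.Tendsto (fun t : ℝ => ‖mahlerFac ((t : ℂ) * ξ) (m + 1)‖ * (3 / 2))
          (nhdsWithin 1 (Set.Iio 1)) (nhds (‖(0 : ℂ)‖ * (3 / 2))) :=
        (hMf.norm).mul_const _
      simpa using this
  have hsum : Filter.Tendsto (fun t : ℝ =>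
      (∑ n ∈ Finset.range (m + 1), (-1 : ℂ) ^ n * mahlerFac ((t : ℂ) * ξ) n) + R t)
      (nhdsWithin 1 (Set.Iio 1)) (nhds L) := by
    simpa using hF.add hRlim
  apply hsum.congr'
  filter_upwards [hev] with t ht
  obtain ⟨ht0, ht1⟩ := ht
  have hq : ‖(t : ℂ) * ξ‖ < 1 := by
    rw [norm_mul, hnormξ, mul_one, Complex.norm_real, Real.norm_of_nonneg ht0.le]
    exact ht1
  exact (U0_iter hq (m + 1)).symm
end

section
/- For every k ∈ ℕ, the polynomial identity U(q; 2k+1) = 1 − ∑_{i=0}^{k-1} q^{2^{2i+1}} {q}_{2i+1} holds in ℤ[q]. -/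
open Polynomial

/-- The Mahler factorial `{q}_n = ∏_{j=0}^{n-1} (1 - q^{2^j})` as a polynomial in `ℤ[q]`. -/
noncomputable def mahlerFacP (n : ℕ) : Polynomial ℤ :=
  ∏ j ∈ Finset.range n, (1 - X ^ 2 ^ j)

/-- The partial sum `U(q;N) = ∑_{n=0}^{N-1} (-1)^n {q}_n` in `ℤ[q]`. -/
noncomputable def UpartP (N : ℕ) : Polynomial ℤ :=
  ∑ n ∈ Finset.range N, (-1 : Polynomial ℤ) ^ n * mahlerFacP n

lemma mahler_succ (n : ℕ) : mahlerFacP (n + 1) = mahlerFacP n * (1 - X ^ 2 ^ n) := by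
  rw [mahlerFacP, Finset.prod_range_succ, mahlerFacP]

theorem stmt5 (k : ℕ) :
    UpartP (2 * k + 1)
      = 1 - ∑ i ∈ Finset.range k, X ^ 2 ^ (2 * i + 1) * mahlerFacP (2 * i + 1) := by
  induction k with
  | zero => simp [UpartP, mahlerFacP]
  | succ k ih =>
    have h : 2 * (k + 1) + 1 = (2 * k + 1) + 1 + 1 := by ring
    rw [h, UpartP, Finset.sum_range_succ, Finset.sum_range_succ, ← UpartP, ih,
      Finset.sum_range_succ, mahler_succ (2 * k + 1)]
    have hpow : ((-1 : Polynomial ℤ)) ^ (2 * k + 1) = -1 := by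
      rw [pow_succ, pow_mul]; simp
    rw [hpow, pow_succ, hpow]
    ring
end

section
/- As formal power series over ℚ, U₀(q) = U₊(q) + (1/2)·{q}_∞, where U₀(q) = (1/2) ∑_{m=0}^{∞} (−1)^{z(m)} q^m. -/
/-- The Mahler factorial `{q}_n = ∏_{j=0}^{n-1} (1 - q^{2^j})` as a power series over `ℚ`. -/
noncomputable def mahlerFacPS (n : ℕ) : PowerSeries ℚ :=
  ∏ j ∈ Finset.range n, (1 - PowerSeries.X ^ 2 ^ j)

/-- `{q}_∞ = ∏_{j=0}^∞ (1 - q^{2^j})` as a formal power series over `ℚ`: the infinite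
product converges coefficientwise, its `n`-th coefficient being that of any partial
product `{q}_N` with `2^N > n`, e.g. `N = n + 1`. -/
noncomputable def mahlerFacInf : PowerSeries ℚ :=
  PowerSeries.mk fun n => PowerSeries.coeff n (mahlerFacPS (n + 1))

/-- `U₊(q) = ∑_{i=0}^∞ q^{2^{2i}} {q}_{2i}` as a formal power series over `ℚ`; each
coefficient receives contributions from only finitely many summands. -/
noncomputable def Uplus : PowerSeries ℚ :=
  PowerSeries.mk fun n =>
    ∑ i ∈ Finset.range (n + 1),
      PowerSeries.coeff n (PowerSeries.X ^ 2 ^ (2 * i) * mahlerFacPS (2 * i))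

/-- `U₀(q) = (1/2) ∑_{m=0}^∞ (-1)^{z(m)} q^m` as a formal power series over `ℚ`. -/
noncomputable def U0PS : PowerSeries ℚ :=
  PowerSeries.mk fun m => (1 / 2 : ℚ) * (-1) ^ zeroDigits m

/-!
Expanding `{q}_N = ∏_{j<N} (1 - q^{2^j})` writes every `n < 2^N` uniquely in binary, so the
`n`-th coefficient of `{q}_N` is `(-1)^{s(n)}`, with `s` the binary digit sum, and so is that
of `{q}_∞`. For `2^L ≤ n < 2^(L+1)` only the summand `q^{2^L} {q}_L` of `U₊` reaches `q^n`, and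
it does so only when `L` is even, with coefficient `(-1)^{s(n - 2^L)} = -(-1)^{s(n)}`.
Since `z(n) + s(n) = L + 1`, both sides agree coefficientwise.
-/

open PowerSeries

def binaryDigitSum (n : ℕ) : ℕ := (Nat.digits 2 n).sum

lemma binaryDigitSum_two_pow_add {N r : ℕ} (hr : r < 2 ^ N) :
    binaryDigitSum (2 ^ N + r) = binaryDigitSum r + 1 := by
  have hlen : (Nat.digits 2 r).length ≤ N := (Nat.digits_length_le_iff one_lt_two r).2 hr
  have h := Nat.digits_append_zeroes_append_digits (b := 2) (k := N - (Nat.digits 2 r).length)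
    (m := 1) (n := r) one_lt_two one_pos
  rw [Nat.add_sub_cancel' hlen, mul_one, add_comm] at h
  rw [binaryDigitSum, binaryDigitSum, ← h]
  simp

lemma List.count_zero_add_sum_of_forall_lt_two {l : List ℕ} (hl : ∀ d ∈ l, d < 2) :
    l.count 0 + l.sum = l.length := by
  induction l with
  | nil => rfl
  | cons a l ih =>
    have := ih fun d hd => hl d (List.mem_cons_of_mem a hd)
    have : a < 2 := hl a List.mem_cons_self
    interval_cases a <;> simp <;> omega

lemma zeroDigits_add_binaryDigitSum {n : ℕ} (hn : n ≠ 0) :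
    zeroDigits n + binaryDigitSum n = Nat.log 2 n + 1 := by
  rw [zeroDigits, binaryDigitSum, List.count_zero_add_sum_of_forall_lt_two
    fun d hd => Nat.digits_lt_base one_lt_two hd, Nat.length_digits 2 n one_lt_two hn]

lemma neg_one_pow_zeroDigits {R : Type*} [Monoid R] [HasDistribNeg R] {n : ℕ} (hn : n ≠ 0) :
    (-1 : R) ^ zeroDigits n = (-1) ^ (Nat.log 2 n + 1) * (-1) ^ binaryDigitSum n := by
  rw [← zeroDigits_add_binaryDigitSum hn, pow_add, mul_assoc, ← pow_add,
    Even.neg_one_pow ⟨_, rfl⟩, mul_one]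

lemma mahlerFacPS_succ (N : ℕ) : mahlerFacPS (N + 1) = mahlerFacPS N * (1 - X ^ 2 ^ N) :=
  Finset.prod_range_succ _ _

lemma coeff_mahlerFacPS (N n : ℕ) :
    coeff n (mahlerFacPS N) = if n < 2 ^ N then (-1 : ℚ) ^ binaryDigitSum n else 0 := by
  induction N generalizing n with
  | zero => rcases n with _ | n <;> simp [mahlerFacPS, binaryDigitSum, coeff_one]
  | succ N ih =>
    rw [mahlerFacPS_succ, mul_sub, mul_one, map_sub, coeff_mul_X_pow', ih]
    rcases lt_or_ge n (2 ^ N) with hn | hn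
    · have : n < 2 ^ (N + 1) := hn.trans (Nat.pow_lt_pow_succ one_lt_two)
      simp [hn, hn.not_ge, this]
    · obtain ⟨r, rfl⟩ := Nat.exists_eq_add_of_le hn
      have hlt : 2 ^ N + r < 2 ^ (N + 1) ↔ r < 2 ^ N := by rw [pow_succ]; omega
      rw [ih, Nat.add_sub_cancel_left, if_neg (by omega), if_pos hn, zero_sub]
      by_cases hr : r < 2 ^ N
      · rw [if_pos hr, if_pos (hlt.2 hr), binaryDigitSum_two_pow_add hr, pow_succ, mul_neg_one]
      · rw [if_neg hr, if_neg (mt hlt.1 hr), neg_zero]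

lemma coeff_mahlerFacInf (n : ℕ) : coeff n mahlerFacInf = (-1 : ℚ) ^ binaryDigitSum n := by
  rw [mahlerFacInf, coeff_mk, coeff_mahlerFacPS,
    if_pos (Nat.lt_two_pow_self.trans (Nat.pow_lt_pow_succ one_lt_two))]

lemma coeff_X_pow_two_pow_mul_mahlerFacPS {n : ℕ} (hn : n ≠ 0) (k : ℕ) :
    coeff n (X ^ 2 ^ k * mahlerFacPS k) =
      if Nat.log 2 n = k then -(-1 : ℚ) ^ binaryDigitSum n else 0 := by
  rw [coeff_X_pow_mul']
  rcases lt_or_ge n (2 ^ k) with hlt | hle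
  · rw [if_neg hlt.not_ge, if_neg]
    rintro rfl
    exact hlt.not_ge (Nat.pow_log_le_self 2 hn)
  · obtain ⟨r, rfl⟩ := Nat.exists_eq_add_of_le hle
    have hlog : Nat.log 2 (2 ^ k + r) = k ↔ r < 2 ^ k := by
      rw [Nat.log_eq_iff (Or.inr ⟨one_lt_two, hn⟩), pow_succ]; omega
    rw [if_pos hle, Nat.add_sub_cancel_left, coeff_mahlerFacPS]
    by_cases hr : r < 2 ^ k
    · rw [if_pos hr, if_pos (hlog.2 hr), binaryDigitSum_two_pow_add hr, pow_succ, mul_neg_one,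
        neg_neg]
    · rw [if_neg hr, if_neg (mt hlog.1 hr)]

lemma coeff_Uplus {n : ℕ} (hn : n ≠ 0) :
    coeff n Uplus = if Even (Nat.log 2 n) then -(-1 : ℚ) ^ binaryDigitSum n else 0 := by
  simp only [Uplus, coeff_mk, coeff_X_pow_two_pow_mul_mahlerFacPS hn]
  split_ifs with heven
  · obtain ⟨i, hi⟩ := heven
    have hmem : i ∈ Finset.range (n + 1) :=
      Finset.mem_range.2 (by have := Nat.log_le_self 2 n; omega)
    simp only [show ∀ j, Nat.log 2 n = 2 * j ↔ i = j from fun j => by omega,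
      Finset.sum_ite_eq, if_pos hmem]
  · exact Finset.sum_eq_zero fun j _ => if_neg fun h => heven ⟨j, by omega⟩

theorem stmt10 : U0PS = Uplus + (1 / 2 : ℚ) • mahlerFacInf := by
  ext n
  rcases eq_or_ne n 0 with rfl | hn
  · simp [U0PS, Uplus, mahlerFacInf, mahlerFacPS, zeroDigits, coeff_X_pow_mul']
  rw [map_add, coeff_smul, coeff_Uplus hn, coeff_mahlerFacInf, U0PS, coeff_mk,
    neg_one_pow_zeroDigits hn, smul_eq_mul]
  split_ifs with heven
  · rw [pow_succ, heven.neg_one_pow]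
    ring
  · rw [(Nat.even_add_one.2 heven).neg_one_pow]
    ring
end

section
/- Let a be an element of ℂ (or any field of characteristic 0) with a ≠ 1. Then the formal power series W₀(q) = (1/(1−a)) ∑_{m=0}^{∞} (−1)^{s₂(m)} a^{r₂(m)} q^m satisfies the Mahler functional equation W₀(q) = 1 + a(1 − q)·W₀(q²), where W₀(q²) denotes the substitution of q² into W₀. -/
/-! Writing `m = 2k` or `m = 2k + 1` appends a binary digit to `k`: for `k ≠ 0` this multiplies
the coefficient `(-1)^{s₂} a^{r₂}` by `a` or by `-a` respectively. These are exactly the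
coefficients of `q^{2k}` and `q^{2k+1}` in `a(1 - q) W₀(q²)`, and at `q⁰` the equation
reduces to `1/(1-a) = 1 + a/(1-a)`. -/

/-- `r₂ m = ⌊log m / log 2⌋ + 1` is the number of binary digits of `m`, with `r₂ 0 = 0`. -/
def r2 (m : ℕ) : ℕ := (Nat.digits 2 m).length

/-- `s₂ m` is the sum of the binary digits of `m`, with `s₂ 0 = 0`. -/
def s2 (m : ℕ) : ℕ := (Nat.digits 2 m).sum

/-- Formal substitution of `q²` into a formal power series: `(substSq f)(q) = f(q²)`. -/
noncomputable def substSq {K : Type*} [Semiring K] (f : PowerSeries K) : PowerSeries K :=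
  PowerSeries.mk fun n => if 2 ∣ n then PowerSeries.coeff (n / 2) f else 0

/-- `W₀(q) = (1/(1-a)) ∑_{m=0}^∞ (-1)^{s₂(m)} a^{r₂(m)} q^m` over a field `K`. -/
noncomputable def W0 {K : Type*} [Field K] (a : K) : PowerSeries K :=
  PowerSeries.mk fun m => (1 / (1 - a)) * (-1) ^ s2 m * a ^ r2 m

lemma digits_two_two_mul_add_one (k : ℕ) : Nat.digits 2 (2 * k + 1) = 1 :: Nat.digits 2 k := by
  rw [add_comm, Nat.digits_add 2 one_lt_two 1 k one_lt_two (Or.inl one_ne_zero)]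

lemma digits_two_two_mul {k : ℕ} (hk : k ≠ 0) : Nat.digits 2 (2 * k) = 0 :: Nat.digits 2 k := by
  simpa using Nat.digits_add 2 one_lt_two 0 k two_pos (Or.inr hk)

lemma r2_two_mul_add_one (k : ℕ) : r2 (2 * k + 1) = r2 k + 1 := by
  rw [r2, r2, digits_two_two_mul_add_one, List.length_cons]

lemma s2_two_mul_add_one (k : ℕ) : s2 (2 * k + 1) = s2 k + 1 := by
  rw [s2, s2, digits_two_two_mul_add_one, List.sum_cons, add_comm]

lemma r2_two_mul {k : ℕ} (hk : k ≠ 0) : r2 (2 * k) = r2 k + 1 := by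
  rw [r2, r2, digits_two_two_mul hk, List.length_cons]

lemma s2_two_mul {k : ℕ} (hk : k ≠ 0) : s2 (2 * k) = s2 k := by
  rw [s2, s2, digits_two_two_mul hk, List.sum_cons, zero_add]

namespace PowerSeries

variable {R : Type*}

lemma coeff_substSq_two_mul [Semiring R] (f : R⟦X⟧) (k : ℕ) :
    coeff (2 * k) (substSq f) = coeff k f := by
  simp [substSq]

lemma coeff_substSq_two_mul_add_one [Semiring R] (f : R⟦X⟧) (k : ℕ) :
    coeff (2 * k + 1) (substSq f) = 0 := by
  simp [substSq]

lemma coeff_one_sub_X_mul_substSq_two_mul [Ring R] (f : R⟦X⟧) (k : ℕ) :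
    coeff (2 * k) ((1 - X) * substSq f) = coeff k f := by
  rcases k with _ | k
  · simpa using coeff_substSq_two_mul f 0
  · have h := coeff_substSq_two_mul f (k + 1)
    rw [mul_add_one] at h ⊢
    rw [sub_mul, one_mul, map_sub, coeff_succ_X_mul, coeff_substSq_two_mul_add_one, sub_zero, h]

lemma coeff_one_sub_X_mul_substSq_two_mul_add_one [Ring R] (f : R⟦X⟧) (k : ℕ) :
    coeff (2 * k + 1) ((1 - X) * substSq f) = -coeff k f := by
  rw [sub_mul, one_mul, map_sub, coeff_succ_X_mul, coeff_substSq_two_mul_add_one,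
    coeff_substSq_two_mul, zero_sub]

end PowerSeries

open PowerSeries

section W0

variable {K : Type*} [Field K] (a : K)

lemma coeff_zero_W0 : coeff 0 (W0 a) = 1 / (1 - a) := by
  simp [W0, r2, s2]

lemma coeff_W0_two_mul {k : ℕ} (hk : k ≠ 0) : coeff (2 * k) (W0 a) = a * coeff k (W0 a) := by
  simp only [W0, coeff_mk, r2_two_mul hk, s2_two_mul hk]
  ring

lemma coeff_W0_two_mul_add_one (k : ℕ) : coeff (2 * k + 1) (W0 a) = -(a * coeff k (W0 a)) := by
  simp only [W0, coeff_mk, r2_two_mul_add_one, s2_two_mul_add_one]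
  ring

end W0

theorem stmt16_general {K : Type*} [Field K] (a : K) (ha : a ≠ 1) :
    W0 a = 1 + PowerSeries.C a * (1 - PowerSeries.X) * substSq (W0 a) := by
  ext n
  rw [map_add, mul_assoc, coeff_C_mul]
  obtain ⟨k, rfl | rfl⟩ := Nat.even_or_odd' n
  · rw [coeff_one_sub_X_mul_substSq_two_mul]
    rcases eq_or_ne k 0 with rfl | hk
    · have : 1 - a ≠ 0 := sub_ne_zero.mpr ha.symm
      rw [coeff_zero_W0, mul_zero, coeff_zero_one]
      field_simp
      ring
    · rw [coeff_W0_two_mul a hk, coeff_one, if_neg (by omega), zero_add]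
  · rw [coeff_one_sub_X_mul_substSq_two_mul_add_one, coeff_W0_two_mul_add_one, coeff_one,
      if_neg (by omega), zero_add, mul_neg]

theorem stmt16 {K : Type*} [Field K] [CharZero K] (a : K) (ha : a ≠ 1) :
    W0 a = 1 + PowerSeries.C a * (1 - PowerSeries.X) * substSq (W0 a) :=
  stmt16_general a ha
end
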